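/- Let N be a finite player set, (ω,Σ) a weight system on N, and (N,v) a TU-game. Define the family of real numbers Ψ^ω_{iT}, for nonempty T⊆N and i∈T, recursively by Ψ^ω_{i∅}=0 and Ψ^ω_{iT} = (ω̄^T_i/ω̄^T)·(v(T)−v(T∖{i})) + Σ_{j∈T∖{i}} (ω̄^T_j/ω̄^T)·Ψ^ω_{i,T∖{j}}. Then for every nonempty T⊆N, the vector (Ψ^ω_{iT})_{i∈T} equals the (ω,Σ)-weighted Shapley value of the subgame v^T of v induced by T (i.e., v^T(S)=v(S) for S⊆T, with the weight system restricted to T). -/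
import Mathlib


open Finset

variable {α : Type*}

noncomputable section

/-- `ω̄^S_i`: the weight of `i` if `i` belongs to the top-priority part `S̄` of `S`, else `0`.
Here the ordered partition `Σ` is encoded by the priority function `p`. -/
def wbar [DecidableEq α] (ω : α → ℝ) (p : α → ℕ) (S : Finset α) (i : α) : ℝ :=
  if i ∈ S ∧ p i = S.sup p then ω i else 0

/-- `ω̄^S = ∑_{i ∈ S̄} ω_i`. -/
def wbarSum [DecidableEq α] (ω : α → ℝ) (p : α → ℕ) (S : Finset α) : ℝ :=
  ∑ i ∈ S, wbar ω p S i

/-- unanimity coefficients `λ_S(v)` (Harsanyi dividends). -/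
def unanimityCoeff [DecidableEq α] (v : Finset α → ℝ) (S : Finset α) : ℝ :=
  ∑ T ∈ S.powerset, (-1 : ℝ) ^ (S.card - T.card) * v T

/-- `(ω,Σ)`-weighted Shapley value of player `i` for the subgame of `v` induced by the ground
coalition `M` (note that `wbar ω p S i = 0` unless `i ∈ S̄`). -/
def wShapley [DecidableEq α] (ω : α → ℝ) (p : α → ℕ) (v : Finset α → ℝ)
    (M : Finset α) (i : α) : ℝ :=
  ∑ S ∈ M.powerset, wbar ω p S i / wbarSum ω p S * unanimityCoeff v S

/-- The family `Ψ^ω_{iT}`, defined recursively by `Ψ^ω_{i∅} = 0` and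
`Ψ^ω_{iT} = (ω̄^T_i/ω̄^T)(v(T)−v(T∖{i})) + ∑_{j ∈ T∖{i}} (ω̄^T_j/ω̄^T) Ψ^ω_{i,T∖{j}}`
(for `T = ∅` all terms vanish, so the formula also yields `0`). -/
def Psi [DecidableEq α] (ω : α → ℝ) (p : α → ℕ) (v : Finset α → ℝ) :
    Finset α → α → ℝ
  | T, i =>
    wbar ω p T i / wbarSum ω p T * (v T - v (T.erase i)) +
      ∑ j ∈ (T.erase i).attach,
        wbar ω p T j.1 / wbarSum ω p T * Psi ω p v (T.erase j.1) i
  termination_by T _ => T.card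
  decreasing_by
    exact Finset.card_lt_card (Finset.erase_ssubset (Finset.mem_of_mem_erase j.2))

lemma neg_one_pow_powerset [DecidableEq α] (x : Finset α) :
    (∑ m ∈ x.powerset, (-1 : ℝ) ^ m.card) = if x = ∅ then 1 else 0 := by
  have h := Finset.sum_powerset_neg_one_pow_card (x := x)
  have : ((∑ m ∈ x.powerset, (-1 : ℤ) ^ m.card : ℤ) : ℝ)
      = ∑ m ∈ x.powerset, (-1 : ℝ) ^ m.card := by push_cast; ring_nf
  rw [← this, h]
  split <;> norm_num

lemma mobius [DecidableEq α] (v : Finset α → ℝ) (S : Finset α) :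
    ∑ R ∈ S.powerset, unanimityCoeff v R = v S := by
  unfold unanimityCoeff
  rw [Finset.sum_comm' (s' := fun Q => S.powerset.filter (fun R => Q ⊆ R)) (t' := S.powerset)
    (by
      intro R Q
      simp only [mem_powerset, mem_filter]
      constructor
      · rintro ⟨h1, h2⟩; exact ⟨⟨h1, h2⟩, h2.trans h1⟩
      · rintro ⟨⟨h1, h2⟩, h3⟩; exact ⟨h1, h2⟩)]
  have key : ∀ Q ∈ S.powerset,
      (∑ R ∈ S.powerset.filter (fun R => Q ⊆ R), (-1 : ℝ) ^ (R.card - Q.card) * v Q)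
        = (if Q = S then 1 else 0) * v Q := by
    intro Q hQ
    rw [mem_powerset] at hQ
    rw [← Finset.sum_mul]
    congr 1
    have himg : ∀ R ∈ S.powerset.filter (fun R => Q ⊆ R), R \ Q ∈ (S \ Q).powerset := by
      intro R hR
      rw [mem_filter, mem_powerset] at hR
      rw [mem_powerset]
      exact sdiff_subset_sdiff hR.1 le_rfl
    have hbij : (∑ R ∈ S.powerset.filter (fun R => Q ⊆ R), (-1 : ℝ) ^ (R.card - Q.card))
        = ∑ m ∈ (S \ Q).powerset, (-1 : ℝ) ^ m.card := by
      refine Finset.sum_bij' (fun R _ => R \ Q) (fun U _ => U ∪ Q) himg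
        (fun U hU => by
          rw [mem_powerset] at hU
          rw [mem_filter, mem_powerset]
          refine ⟨union_subset (hU.trans (sdiff_subset)) hQ, subset_union_right⟩)
        (fun R hR => by
          rw [mem_filter, mem_powerset] at hR
          exact sdiff_union_of_subset hR.2)
        (fun U hU => by
          rw [mem_powerset] at hU
          apply union_sdiff_cancel_right
          rw [Finset.disjoint_left]
          exact fun x hx hxQ => (mem_sdiff.1 (hU hx)).2 hxQ)
        (fun R hR => by
          rw [mem_filter, mem_powerset] at hR
          rw [card_sdiff_of_subset hR.2])
    rw [hbij, neg_one_pow_powerset]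
    congr 1
    rw [eq_iff_iff, sdiff_eq_empty_iff_subset]
    exact ⟨fun h => subset_antisymm hQ h, fun h => h ▸ le_rfl⟩
  rw [Finset.sum_congr rfl key]
  simp [ite_mul]

lemma wbar_nonneg [DecidableEq α] (ω : α → ℝ) (hω : ∀ i, 0 < ω i) (p : α → ℕ)
    (S : Finset α) (i : α) : 0 ≤ wbar ω p S i := by
  unfold wbar; split
  · exact (hω i).le
  · exact le_rfl

lemma wbarSum_pos [DecidableEq α] (ω : α → ℝ) (hω : ∀ i, 0 < ω i) (p : α → ℕ)
    {S : Finset α} (hS : S.Nonempty) : 0 < wbarSum ω p S := by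
  obtain ⟨i₀, hi₀, hsup⟩ := Finset.exists_mem_eq_sup S hS p
  refine Finset.sum_pos' (fun i _ => wbar_nonneg ω hω p S i) ⟨i₀, hi₀, ?_⟩
  rw [wbar, if_pos ⟨hi₀, hsup.symm⟩]
  exact hω i₀

lemma wbar_subset_eq [DecidableEq α] (ω : α → ℝ) (p : α → ℕ) {S T : Finset α}
    (hST : S ⊆ T) (hsup : S.sup p = T.sup p) {j : α} (hj : j ∈ S) :
    wbar ω p T j = wbar ω p S j := by
  unfold wbar
  by_cases h : p j = S.sup p
  · rw [if_pos ⟨hST hj, hsup ▸ h⟩, if_pos ⟨hj, h⟩]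
  · rw [if_neg (fun hc => h (hsup ▸ hc.2)), if_neg (fun hc => h hc.2)]

lemma wbar_subset_zero [DecidableEq α] (ω : α → ℝ) (p : α → ℕ) {S T : Finset α}
    (hST : S ⊆ T) (hsup : S.sup p ≠ T.sup p) {j : α} (hj : j ∈ S) :
    wbar ω p T j = 0 := by
  rw [wbar, if_neg]
  rintro ⟨-, h⟩
  exact hsup (le_antisymm (Finset.sup_mono hST)
    (h ▸ Finset.le_sup hj))

/-- Key identity: `a_i(T) = a_i(S) * ∑_{j∈S} a_j(T)` for `i ∈ S ⊆ T`. -/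
lemma key_identity [DecidableEq α] (ω : α → ℝ) (hω : ∀ i, 0 < ω i) (p : α → ℕ)
    {S T : Finset α} (hST : S ⊆ T) {i : α} (hi : i ∈ S) :
    wbar ω p T i / wbarSum ω p T
      = wbar ω p S i / wbarSum ω p S * ∑ j ∈ S, wbar ω p T j / wbarSum ω p T := by
  rw [← Finset.sum_div]
  by_cases hsup : S.sup p = T.sup p
  · rw [Finset.sum_congr rfl (fun j hj => wbar_subset_eq ω p hST hsup hj)]
    rw [wbar_subset_eq ω p hST hsup hi]
    have hS : (0:ℝ) < wbarSum ω p S := wbarSum_pos ω hω p ⟨i, hi⟩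
    rw [show (∑ j ∈ S, wbar ω p S j) = wbarSum ω p S from rfl]
    field_simp
  · rw [Finset.sum_congr rfl (fun j hj => wbar_subset_zero ω p hST hsup hj),
      wbar_subset_zero ω p hST hsup hi]
    simp

lemma sum_ratio_one [DecidableEq α] (ω : α → ℝ) (hω : ∀ i, 0 < ω i) (p : α → ℕ)
    {T : Finset α} (hT : T.Nonempty) :
    ∑ j ∈ T, wbar ω p T j / wbarSum ω p T = 1 := by
  rw [← Finset.sum_div]
  exact div_self (wbarSum_pos ω hω p hT).ne'

lemma wbar_notMem [DecidableEq α] (ω : α → ℝ) (p : α → ℕ) {S : Finset α} {i : α}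
    (h : i ∉ S) : wbar ω p S i = 0 := by
  rw [wbar, if_neg (fun hc => h hc.1)]

/-- Pointwise coefficient identity. -/
lemma coeff_identity [DecidableEq α] (ω : α → ℝ) (hω : ∀ i, 0 < ω i) (p : α → ℕ)
    {S T : Finset α} (hST : S ⊆ T) {i : α} (hi : i ∈ T) :
    wbar ω p S i / wbarSum ω p S
      = wbar ω p T i / wbarSum ω p T * (if i ∈ S then 1 else 0)
        + ∑ j ∈ T.erase i, wbar ω p T j / wbarSum ω p T *
            (if j ∈ S then 0 else wbar ω p S i / wbarSum ω p S) := by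
  by_cases hiS : i ∈ S
  · rw [if_pos hiS, mul_one]
    have hsplit : ∑ j ∈ T.erase i, wbar ω p T j / wbarSum ω p T *
        (if j ∈ S then 0 else wbar ω p S i / wbarSum ω p S)
        = ∑ j ∈ T \ S, wbar ω p T j / wbarSum ω p T * (wbar ω p S i / wbarSum ω p S) := by
      have hset : (T.erase i).filter (fun j => j ∉ S) = T \ S := by
        ext j
        simp only [mem_filter, mem_erase, mem_sdiff]
        constructor
        · rintro ⟨⟨-, hjT⟩, hjS⟩; exact ⟨hjT, hjS⟩
        · rintro ⟨hjT, hjS⟩; exact ⟨⟨fun h => hjS (h ▸ hiS), hjT⟩, hjS⟩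
      rw [← hset, Finset.sum_filter]
      refine Finset.sum_congr rfl (fun j _ => ?_)
      by_cases hjS : j ∈ S <;> simp [hjS]
    rw [hsplit, ← Finset.sum_mul]
    have hsdiff : ∑ j ∈ T \ S, wbar ω p T j / wbarSum ω p T
        = 1 - ∑ j ∈ S, wbar ω p T j / wbarSum ω p T := by
      have := Finset.sum_sdiff (f := fun j => wbar ω p T j / wbarSum ω p T) hST
      rw [sum_ratio_one ω hω p ⟨i, hi⟩] at this
      linarith
    rw [hsdiff, key_identity ω hω p hST hiS]
    ring
  · rw [wbar_notMem ω p hiS, zero_div, if_neg hiS, mul_zero, zero_add]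
    simp

lemma powerset_erase [DecidableEq α] (T : Finset α) (j : α) :
    (T.erase j).powerset = T.powerset.filter (fun S => j ∉ S) := by
  ext S
  simp only [mem_powerset, mem_filter, subset_erase]

lemma shapley_rec [DecidableEq α] (ω : α → ℝ) (hω : ∀ i, 0 < ω i) (p : α → ℕ)
    (v : Finset α → ℝ) {T : Finset α} {i : α} (hi : i ∈ T) :
    wShapley ω p v T i = wbar ω p T i / wbarSum ω p T * (v T - v (T.erase i))
      + ∑ j ∈ T.erase i, wbar ω p T j / wbarSum ω p T * wShapley ω p v (T.erase j) i := by
  have stepA : v T - v (T.erase i)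
      = ∑ S ∈ T.powerset, (if i ∈ S then unanimityCoeff v S else 0) := by
    conv_lhs => rw [← mobius v T, ← mobius v (T.erase i)]
    rw [powerset_erase, Finset.sum_filter, ← Finset.sum_sub_distrib]
    refine Finset.sum_congr rfl fun S _ => ?_
    by_cases hiS : i ∈ S <;> simp [hiS]
  have stepB : ∀ j, wShapley ω p v (T.erase j) i
      = ∑ S ∈ T.powerset,
          (if j ∈ S then 0 else wbar ω p S i / wbarSum ω p S * unanimityCoeff v S) := by
    intro j
    rw [wShapley, powerset_erase, Finset.sum_filter]
    refine Finset.sum_congr rfl fun S _ => ?_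
    by_cases hjS : j ∈ S <;> simp [hjS]
  have pointwise : ∀ S ∈ T.powerset,
      wbar ω p S i / wbarSum ω p S * unanimityCoeff v S
        = wbar ω p T i / wbarSum ω p T * (if i ∈ S then unanimityCoeff v S else 0)
          + ∑ j ∈ T.erase i, wbar ω p T j / wbarSum ω p T *
              (if j ∈ S then 0 else wbar ω p S i / wbarSum ω p S * unanimityCoeff v S) := by
    intro S hS
    rw [mem_powerset] at hS
    have h := coeff_identity ω hω p hS hi
    calc wbar ω p S i / wbarSum ω p S * unanimityCoeff v S
        = (wbar ω p T i / wbarSum ω p T * (if i ∈ S then 1 else 0)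
            + ∑ j ∈ T.erase i, wbar ω p T j / wbarSum ω p T *
                (if j ∈ S then 0 else wbar ω p S i / wbarSum ω p S))
            * unanimityCoeff v S := by rw [← h]
      _ = _ := by
          rw [add_mul, Finset.sum_mul]
          congr 1
          · by_cases hiS : i ∈ S <;> simp [hiS]
          · refine Finset.sum_congr rfl fun j _ => ?_
            by_cases hjS : j ∈ S <;> simp [hjS, mul_assoc]
  calc wShapley ω p v T i
      = ∑ S ∈ T.powerset, wbar ω p S i / wbarSum ω p S * unanimityCoeff v S := rfl
    _ = ∑ S ∈ T.powerset,
          (wbar ω p T i / wbarSum ω p T * (if i ∈ S then unanimityCoeff v S else 0)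
            + ∑ j ∈ T.erase i, wbar ω p T j / wbarSum ω p T *
                (if j ∈ S then 0 else wbar ω p S i / wbarSum ω p S * unanimityCoeff v S)) :=
        Finset.sum_congr rfl pointwise
    _ = _ := by
        rw [Finset.sum_add_distrib]
        congr 1
        · rw [← Finset.mul_sum, ← stepA]
        · rw [Finset.sum_comm]
          refine Finset.sum_congr rfl fun j _ => ?_
          rw [← Finset.mul_sum, ← stepB j]

/-- For every nonempty `T ⊆ N` and `i ∈ T`, `Ψ^ω_{iT}` is the `(ω,Σ)`-weighted Shapley value of
player `i` in the subgame of `v` induced by `T` (with the weight system restricted to `T`). -/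
theorem psi_eq_weighted_shapley_subgame [Fintype α] [DecidableEq α]
    (ω : α → ℝ) (hω : ∀ i, 0 < ω i) (p : α → ℕ) (hp : ∀ i, 1 ≤ p i)
    (v : Finset α → ℝ) (hv : v ∅ = 0)
    (T : Finset α) (hT : T.Nonempty) (i : α) (hi : i ∈ T) :
    Psi ω p v T i = wShapley ω p v T i := by
  suffices H : ∀ T : Finset α, ∀ i ∈ T, Psi ω p v T i = wShapley ω p v T i from H T i hi
  intro T
  induction T using Finset.strongInduction with
  | _ T ih =>
    intro i hi
    rw [Psi]
    rw [Finset.sum_attach (T.erase i)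
      (fun j => wbar ω p T j / wbarSum ω p T * Psi ω p v (T.erase j) i)]
    rw [shapley_rec ω hω p v hi]
    congr 1
    refine Finset.sum_congr rfl fun j hj => ?_
    rw [ih (T.erase j) (Finset.erase_ssubset (Finset.mem_of_mem_erase hj)) i
      (Finset.mem_erase.2 ⟨fun h => (Finset.mem_erase.1 hj).1 h.symm, hi⟩)]

end
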